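/- Let (θ_A, θ_B, θ_S) be a classical decaying solution of the three-phase heat system on (0,T) with constants κ_A, κ_B, κ_S, α_S > 0, and define E(t) = ∫_{ℝ³₊} θ_A(x,t)² dx + ∫_{ℝ³₋} θ_B(x,t)² dx + α_S ∫_{ℝ²} θ_S(x_h,t)² dx_h. Then for every t ∈ (0,T), E is differentiable at t and E'(t) = −2κ_A ∫_{ℝ³₊} |∇θ_A(x,t)|² dx − 2κ_B ∫_{ℝ³₋} |∇θ_B(x,t)|² dx − 2κ_S ∫_{ℝ²} |∇_hθ_S(x_h,t)|² dx_h. In particular the interface flux terms cancel in the energy balance. -/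

import Mathlib

/-!
Differentiating under the integral sign, with the decay bound as dominating function (uniformly
for times near `t`, by continuity of `M`), gives
`E' = 2∫ θ_A ∂ₜθ_A + 2∫ θ_B ∂ₜθ_B + 2α_S ∫ θ_S ∂ₜθ_S`.
Inserting the heat equations, Green's first identity on each half space turns `∫ θ Δθ` into
`-∫ |∇θ|²` plus the boundary term `∓∫ θ(·,0) ∂₃θ(·,0)`, and on `ℝ²` it leaves no boundary term.
By the interface conditions the surface equation contributes exactly the opposite boundary terms.

Green's identity on a half space is proved slice by slice: horizontal second derivatives are
integrated by parts on each plane `x₃ = s`, and the vertical one is the fundamental theorem of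
calculus on a half-line, where `θ ∂₃θ` tends to `0` at infinity because it and its derivative are
integrable.
-/

open MeasureTheory Set

noncomputable section

/- We realize `ℝ³` as `(ℝ × ℝ) × ℝ`, writing a point `x` as `(x_h, x₃)` with
horizontal part `x_h = x.1 ∈ ℝ × ℝ` and vertical coordinate `x₃ = x.2`. -/

/-- The standard basis directions of `ℝ³ = (ℝ × ℝ) × ℝ`. -/
def e1 : (ℝ × ℝ) × ℝ := ((1, 0), 0)
def e2 : (ℝ × ℝ) × ℝ := ((0, 1), 0)
def e3 : (ℝ × ℝ) × ℝ := ((0, 0), 1)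

/-- Open upper half space `ℝ³₊ = {x : x₃ > 0}`. -/
def upperHalf : Set ((ℝ × ℝ) × ℝ) := {x | 0 < x.2}
/-- Open lower half space `ℝ³₋ = {x : x₃ < 0}`. -/
def lowerHalf : Set ((ℝ × ℝ) × ℝ) := {x | x.2 < 0}
/-- Closed upper half space `{x : x₃ ≥ 0}`. -/
def UA : Set ((ℝ × ℝ) × ℝ) := {x | 0 ≤ x.2}
/-- Closed lower half space `{x : x₃ ≤ 0}`. -/
def UB : Set ((ℝ × ℝ) × ℝ) := {x | x.2 ≤ 0}

/-- Partial derivative within a set `s` (one-sided up to the boundary), in direction `v`. -/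
noncomputable def pdW (s : Set ((ℝ × ℝ) × ℝ)) (v : (ℝ × ℝ) × ℝ)
    (f : (ℝ × ℝ) × ℝ → ℝ) (x : (ℝ × ℝ) × ℝ) : ℝ :=
  fderivWithin ℝ f s x v

/-- Laplacian `Δf` computed with derivatives within `s`. -/
noncomputable def lapW (s : Set ((ℝ × ℝ) × ℝ)) (f : (ℝ × ℝ) × ℝ → ℝ)
    (x : (ℝ × ℝ) × ℝ) : ℝ :=
  pdW s e1 (pdW s e1 f) x + pdW s e2 (pdW s e2 f) x + pdW s e3 (pdW s e3 f) x

/-- `|∇f|²` computed with derivatives within `s`. -/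
noncomputable def gradSqW (s : Set ((ℝ × ℝ) × ℝ)) (f : (ℝ × ℝ) × ℝ → ℝ)
    (x : (ℝ × ℝ) × ℝ) : ℝ :=
  (pdW s e1 f x) ^ 2 + (pdW s e2 f x) ^ 2 + (pdW s e3 f x) ^ 2

/-- Horizontal partial derivative on `ℝ²` in direction `v`. -/
noncomputable def pdH (v : ℝ × ℝ) (f : ℝ × ℝ → ℝ) (x : ℝ × ℝ) : ℝ := fderiv ℝ f x v

/-- Horizontal Laplacian `Δ_h f = ∂₁²f + ∂₂²f` on `ℝ²`. -/
noncomputable def lapH (f : ℝ × ℝ → ℝ) (x : ℝ × ℝ) : ℝ :=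
  pdH (1, 0) (pdH (1, 0) f) x + pdH (0, 1) (pdH (0, 1) f) x

/-- `|∇_h f|²` on `ℝ²`. -/
noncomputable def gradSqH (f : ℝ × ℝ → ℝ) (x : ℝ × ℝ) : ℝ :=
  (pdH (1, 0) f x) ^ 2 + (pdH (0, 1) f x) ^ 2

/-- A classical decaying solution of the three-phase heat system on `(0,T)` with constants
`κ_A, κ_B, κ_S, α_S`: regularity up to the interface, the three heat equations, the interface
conditions, and the polynomial decay bounds with a continuous function `M` on `(0,T)`. -/
structure ClassicalDecayingSolution (T κA κB κS αS : ℝ)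
    (θA θB : (ℝ × ℝ) × ℝ → ℝ → ℝ) (θS : ℝ × ℝ → ℝ → ℝ) : Prop where
  contA : ContinuousOn (fun p : ((ℝ × ℝ) × ℝ) × ℝ => θA p.1 p.2) (UA ×ˢ Ioo 0 T)
  contB : ContinuousOn (fun p : ((ℝ × ℝ) × ℝ) × ℝ => θB p.1 p.2) (UB ×ˢ Ioo 0 T)
  contS : ContinuousOn (fun p : (ℝ × ℝ) × ℝ => θS p.1 p.2) (univ ×ˢ Ioo 0 T)
  spaceA : ∀ t ∈ Ioo (0 : ℝ) T, ContDiffOn ℝ 2 (fun x => θA x t) UA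
  spaceB : ∀ t ∈ Ioo (0 : ℝ) T, ContDiffOn ℝ 2 (fun x => θB x t) UB
  spaceS : ∀ t ∈ Ioo (0 : ℝ) T, ContDiff ℝ 2 (fun xh => θS xh t)
  timeA : ∀ x ∈ UA, ∀ t ∈ Ioo (0 : ℝ) T, DifferentiableAt ℝ (θA x) t
  timeB : ∀ x ∈ UB, ∀ t ∈ Ioo (0 : ℝ) T, DifferentiableAt ℝ (θB x) t
  timeS : ∀ xh : ℝ × ℝ, ∀ t ∈ Ioo (0 : ℝ) T, DifferentiableAt ℝ (θS xh) t
  timeDerivContA : ContinuousOn (fun p : ((ℝ × ℝ) × ℝ) × ℝ => deriv (θA p.1) p.2)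
    (UA ×ˢ Ioo 0 T)
  timeDerivContB : ContinuousOn (fun p : ((ℝ × ℝ) × ℝ) × ℝ => deriv (θB p.1) p.2)
    (UB ×ˢ Ioo 0 T)
  timeDerivContS : ContinuousOn (fun p : (ℝ × ℝ) × ℝ => deriv (θS p.1) p.2)
    (univ ×ˢ Ioo 0 T)
  pdeA : ∀ x : (ℝ × ℝ) × ℝ, 0 < x.2 → ∀ t ∈ Ioo (0 : ℝ) T,
    deriv (θA x) t = κA * lapW UA (fun y => θA y t) x
  pdeB : ∀ x : (ℝ × ℝ) × ℝ, x.2 < 0 → ∀ t ∈ Ioo (0 : ℝ) T,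
    deriv (θB x) t = κB * lapW UB (fun y => θB y t) x
  pdeS : ∀ xh : ℝ × ℝ, ∀ t ∈ Ioo (0 : ℝ) T,
    αS * deriv (θS xh) t = κS * lapH (fun y => θS y t) xh
      + κA * pdW UA e3 (fun y => θA y t) (xh, 0)
      - κB * pdW UB e3 (fun y => θB y t) (xh, 0)
  interfaceA : ∀ xh : ℝ × ℝ, ∀ t ∈ Ioo (0 : ℝ) T, θA (xh, 0) t = θS xh t
  interfaceB : ∀ xh : ℝ × ℝ, ∀ t ∈ Ioo (0 : ℝ) T, θB (xh, 0) t = θS xh t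
  decay : ∃ M : ℝ → ℝ, ContinuousOn M (Ioo 0 T) ∧
    (∀ x ∈ UA, ∀ t ∈ Ioo (0 : ℝ) T,
      |θA x t| + |deriv (θA x) t| + ‖fderivWithin ℝ (fun y => θA y t) UA x‖
        + ‖fderivWithin ℝ (fderivWithin ℝ (fun y => θA y t) UA) UA x‖
        ≤ M t / (1 + ‖x‖) ^ 4) ∧
    (∀ x ∈ UB, ∀ t ∈ Ioo (0 : ℝ) T,
      |θB x t| + |deriv (θB x) t| + ‖fderivWithin ℝ (fun y => θB y t) UB x‖
        + ‖fderivWithin ℝ (fderivWithin ℝ (fun y => θB y t) UB) UB x‖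
        ≤ M t / (1 + ‖x‖) ^ 4) ∧
    (∀ xh : ℝ × ℝ, ∀ t ∈ Ioo (0 : ℝ) T,
      |θS xh t| + |deriv (θS xh) t| + ‖fderiv ℝ (fun y => θS y t) xh‖
        + ‖fderiv ℝ (fderiv ℝ (fun y => θS y t)) xh‖ ≤ M t / (1 + ‖xh‖) ^ 4)

/-- The total heat energy
`E(t) = ∫_{ℝ³₊} θ_A² dx + ∫_{ℝ³₋} θ_B² dx + α_S ∫_{ℝ²} θ_S² dx_h`. -/
noncomputable def energy (αS : ℝ) (θA θB : (ℝ × ℝ) × ℝ → ℝ → ℝ) (θS : ℝ × ℝ → ℝ → ℝ)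
    (t : ℝ) : ℝ :=
  (∫ x in upperHalf, (θA x t) ^ 2) + (∫ x in lowerHalf, (θB x t) ^ 2)
    + αS * ∫ xh : ℝ × ℝ, (θS xh t) ^ 2

open Filter Topology Module

section Weight

variable {α : Type*} [MeasurableSpace α] {μ : Measure α}

theorem integrable_mul_of_abs_le {f g w : α → ℝ} {a b : ℝ}
    (hf : AEStronglyMeasurable f μ) (hg : AEStronglyMeasurable g μ)
    (hw : Integrable (fun x => w x ^ 2) μ)
    (hfw : ∀ᵐ x ∂μ, |f x| ≤ a * w x) (hgw : ∀ᵐ x ∂μ, |g x| ≤ b * w x) :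
    Integrable (fun x => f x * g x) μ := by
  refine (hw.const_mul (a * b)).mono' (hf.mul hg) ?_
  filter_upwards [hfw, hgw] with x hfx hgx
  rw [Real.norm_eq_abs, abs_mul]
  calc |f x| * |g x| ≤ (a * w x) * (b * w x) :=
        mul_le_mul hfx hgx (abs_nonneg _) ((abs_nonneg _).trans hfx)
    _ = a * b * w x ^ 2 := by ring

variable {F : Type*} [NormedAddCommGroup F] [NormedSpace ℝ F] [FiniteDimensional ℝ F]
  [MeasureSpace F] [BorelSpace F] [(volume : Measure F).IsAddHaarMeasure]

theorem integrable_sq_div_one_add_norm_pow_four (hF : finrank ℝ F < 8) (c : ℝ) :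
    Integrable (fun x : F => (c / (1 + ‖x‖) ^ 4) ^ 2) := by
  have hF' : (finrank ℝ F : ℝ) < (8 : ℕ) := by exact_mod_cast hF
  refine ((integrable_one_add_norm hF').const_mul (c ^ 2)).congr (.of_forall fun x => ?_)
  have hx : 0 < 1 + ‖x‖ := by positivity
  dsimp only
  rw [Real.rpow_neg hx.le, Real.rpow_natCast, div_pow, ← pow_mul, div_eq_mul_inv]

end Weight

section Dominated

variable {F : Type*} [NormedAddCommGroup F] [NormedSpace ℝ F] [MeasureSpace F]

structure C2DominatedOn (φ : F → ℝ) (O : Set F) (w : F → ℝ) : Prop where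
  isOpen : IsOpen O
  contDiffOn : ContDiffOn ℝ 2 φ O
  abs_le : ∀ x ∈ O, |φ x| ≤ w x
  norm_fderiv_le : ∀ x ∈ O, ‖fderiv ℝ φ x‖ ≤ w x
  norm_fderiv_fderiv_le : ∀ x ∈ O, ‖fderiv ℝ (fderiv ℝ φ) x‖ ≤ w x
  integrableOn_sq : IntegrableOn (fun x => w x ^ 2) O

namespace C2DominatedOn

variable {φ : F → ℝ} {O : Set F} {w : F → ℝ}

theorem differentiableAt (hφ : C2DominatedOn φ O w) {x : F} (hx : x ∈ O) :
    DifferentiableAt ℝ φ x :=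
  (hφ.contDiffOn.contDiffAt (hφ.isOpen.mem_nhds hx)).differentiableAt (by norm_num)

theorem differentiableAt_fderiv (hφ : C2DominatedOn φ O w) {x : F} (hx : x ∈ O) :
    DifferentiableAt ℝ (fderiv ℝ φ) x :=
  ((hφ.contDiffOn.contDiffAt (hφ.isOpen.mem_nhds hx)).fderiv_right (m := 1)
    le_rfl).differentiableAt one_ne_zero

theorem continuousOn_fderiv_apply (hφ : C2DominatedOn φ O w) (v : F) :
    ContinuousOn (fun x => fderiv ℝ φ x v) O :=
  (hφ.contDiffOn.continuousOn_fderiv_of_isOpen hφ.isOpen (by norm_num)).clm_apply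
    continuousOn_const

theorem continuousOn_fderiv_fderiv_apply (hφ : C2DominatedOn φ O w) (v : F) :
    ContinuousOn (fun x => fderiv ℝ (fderiv ℝ φ) x v v) O :=
  (((hφ.contDiffOn.fderiv_of_isOpen hφ.isOpen (m := 1) le_rfl).continuousOn_fderiv_of_isOpen
    hφ.isOpen le_rfl).clm_apply continuousOn_const).clm_apply continuousOn_const

theorem abs_fderiv_apply_le (hφ : C2DominatedOn φ O w) {x : F} (hx : x ∈ O) (v : F) :
    |fderiv ℝ φ x v| ≤ ‖v‖ * w x :=
  calc |fderiv ℝ φ x v| ≤ ‖fderiv ℝ φ x‖ * ‖v‖ := (fderiv ℝ φ x).le_opNorm v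
    _ ≤ w x * ‖v‖ := by gcongr; exact hφ.norm_fderiv_le x hx
    _ = ‖v‖ * w x := mul_comm _ _

theorem abs_fderiv_fderiv_apply_le (hφ : C2DominatedOn φ O w) {x : F} (hx : x ∈ O) (v : F) :
    |fderiv ℝ (fderiv ℝ φ) x v v| ≤ ‖v‖ ^ 2 * w x :=
  calc |fderiv ℝ (fderiv ℝ φ) x v v| ≤ ‖fderiv ℝ (fderiv ℝ φ) x‖ * ‖v‖ * ‖v‖ :=
        (fderiv ℝ (fderiv ℝ φ) x).le_opNorm₂ v v
    _ ≤ w x * ‖v‖ * ‖v‖ := by gcongr; exact hφ.norm_fderiv_fderiv_le x hx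
    _ = ‖v‖ ^ 2 * w x := by ring

theorem hasFDerivAt_fderiv_apply (hφ : C2DominatedOn φ O w) {x : F} (hx : x ∈ O) (v : F) :
    HasFDerivAt (fun y => fderiv ℝ φ y v)
      ((ContinuousLinearMap.apply ℝ ℝ v).comp (fderiv ℝ (fderiv ℝ φ) x)) x :=
  (ContinuousLinearMap.apply ℝ ℝ v).hasFDerivAt.comp x (hφ.differentiableAt_fderiv hx).hasFDerivAt

variable [OpensMeasurableSpace F]

theorem integrableOn_mul (hφ : C2DominatedOn φ O w) {f g : F → ℝ} {a b : ℝ}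
    (hf : ContinuousOn f O) (hg : ContinuousOn g O)
    (hfw : ∀ x ∈ O, |f x| ≤ a * w x) (hgw : ∀ x ∈ O, |g x| ≤ b * w x) :
    IntegrableOn (fun x => f x * g x) O :=
  have hO := hφ.isOpen.measurableSet
  integrable_mul_of_abs_le (hf.aestronglyMeasurable hO) (hg.aestronglyMeasurable hO)
    hφ.integrableOn_sq (ae_restrict_of_forall_mem hO hfw) (ae_restrict_of_forall_mem hO hgw)

theorem integrableOn_mul_fderiv (hφ : C2DominatedOn φ O w) (v : F) :
    IntegrableOn (fun x => φ x * fderiv ℝ φ x v) O :=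
  hφ.integrableOn_mul (a := 1) hφ.contDiffOn.continuousOn (hφ.continuousOn_fderiv_apply v)
    (fun x hx => by simpa using hφ.abs_le x hx) fun x hx => hφ.abs_fderiv_apply_le hx v

theorem integrableOn_fderiv_sq (hφ : C2DominatedOn φ O w) (v : F) :
    IntegrableOn (fun x => fderiv ℝ φ x v ^ 2) O := by
  simpa only [sq] using hφ.integrableOn_mul (hφ.continuousOn_fderiv_apply v)
    (hφ.continuousOn_fderiv_apply v) (fun x hx => hφ.abs_fderiv_apply_le hx v)
    fun x hx => hφ.abs_fderiv_apply_le hx v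

theorem integrableOn_mul_fderiv_fderiv (hφ : C2DominatedOn φ O w) (v : F) :
    IntegrableOn (fun x => φ x * fderiv ℝ (fderiv ℝ φ) x v v) O :=
  hφ.integrableOn_mul (a := 1) hφ.contDiffOn.continuousOn
    (hφ.continuousOn_fderiv_fderiv_apply v) (fun x hx => by simpa using hφ.abs_le x hx)
    fun x hx => hφ.abs_fderiv_fderiv_apply_le hx v

end C2DominatedOn

end Dominated

section SecondDerivatives

variable {F : Type*} [NormedAddCommGroup F] [NormedSpace ℝ F]

theorem fderiv_fderiv_apply {f : F → ℝ} {x : F} (h : DifferentiableAt ℝ (fderiv ℝ f) x)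
    (v w : F) : fderiv ℝ (fun y => fderiv ℝ f y v) x w = fderiv ℝ (fderiv ℝ f) x w v := by
  rw [fderiv_clm_apply h (differentiableAt_const v)]
  simp

theorem fderivWithin_fderivWithin_of_mem_nhds {f : F → ℝ} {s : Set F} {x : F} (hs : s ∈ 𝓝 x) :
    fderivWithin ℝ (fderivWithin ℝ f s) s x = fderiv ℝ (fderiv ℝ f) x := by
  rw [fderivWithin_of_mem_nhds hs]
  refine EventuallyEq.fderiv_eq ?_
  filter_upwards [eventually_mem_nhds_iff.2 hs] with y hy using fderivWithin_of_mem_nhds hy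

variable {f : (ℝ × ℝ) × ℝ → ℝ} {s : Set ((ℝ × ℝ) × ℝ)} {x : (ℝ × ℝ) × ℝ}

theorem pdW_of_mem_nhds (hs : s ∈ 𝓝 x) (v : (ℝ × ℝ) × ℝ) : pdW s v f x = fderiv ℝ f x v := by
  rw [pdW, fderivWithin_of_mem_nhds hs]

theorem pdW_pdW_of_mem_nhds (hs : s ∈ 𝓝 x) (h : DifferentiableAt ℝ (fderiv ℝ f) x)
    (v : (ℝ × ℝ) × ℝ) : pdW s v (pdW s v f) x = fderiv ℝ (fderiv ℝ f) x v v := by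
  have hfd : pdW s v f =ᶠ[𝓝 x] fun y => fderiv ℝ f y v := by
    filter_upwards [eventually_mem_nhds_iff.2 hs] with y hy using pdW_of_mem_nhds hy v
  rw [pdW, fderivWithin_of_mem_nhds hs, hfd.fderiv_eq, fderiv_fderiv_apply h]

theorem lapW_of_mem_nhds (hs : s ∈ 𝓝 x) (h : DifferentiableAt ℝ (fderiv ℝ f) x) :
    lapW s f x = fderiv ℝ (fderiv ℝ f) x e1 e1 + fderiv ℝ (fderiv ℝ f) x e2 e2
      + fderiv ℝ (fderiv ℝ f) x e3 e3 := by
  simp only [lapW, pdW_pdW_of_mem_nhds hs h]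

theorem gradSqW_of_mem_nhds (hs : s ∈ 𝓝 x) :
    gradSqW s f x = fderiv ℝ f x e1 ^ 2 + fderiv ℝ f x e2 ^ 2 + fderiv ℝ f x e3 ^ 2 := by
  simp only [gradSqW, pdW_of_mem_nhds hs]

theorem lapH_eq {ψ : ℝ × ℝ → ℝ} {x : ℝ × ℝ} (h : DifferentiableAt ℝ (fderiv ℝ ψ) x) :
    lapH ψ x = fderiv ℝ (fderiv ℝ ψ) x (1, 0) (1, 0) + fderiv ℝ (fderiv ℝ ψ) x (0, 1) (0, 1) := by
  unfold lapH pdH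
  rw [fderiv_fderiv_apply h, fderiv_fderiv_apply h]

end SecondDerivatives

theorem C2DominatedOn.isOpen_of_univ_prod {E : Type*} [NormedAddCommGroup E] [NormedSpace ℝ E]
    [MeasureSpace E] {φ w : E × ℝ → ℝ} {I : Set ℝ} (hφ : C2DominatedOn φ (univ ×ˢ I) w) :
    IsOpen I := by
  simpa using hφ.isOpen.preimage (continuous_const.prodMk continuous_id :
    Continuous fun s : ℝ => ((0 : E), s))

theorem volume_restrict_univ_prod {Y Z : Type*} [MeasureSpace Y] [MeasureSpace Z]
    [SFinite (volume : Measure Y)] [SFinite (volume : Measure Z)] (I : Set Z) :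
    (volume : Measure (Y × Z)).restrict (univ ×ˢ I)
      = (volume : Measure Y).prod (volume.restrict I) := by
  rw [Measure.volume_eq_prod, ← Measure.prod_restrict, Measure.restrict_univ]

section IntegrationByParts

variable {E : Type*} [NormedAddCommGroup E] [NormedSpace ℝ E] [FiniteDimensional ℝ E]
  [MeasureSpace E] [BorelSpace E] [(volume : Measure E).IsAddHaarMeasure]

theorem integral_mul_eq_neg_of_hasFDerivAt {f g : E → ℝ} {f' g' : E → E →L[ℝ] ℝ} {v : E}
    (hfg' : Integrable fun x => f x * g' x v) (hf'g : Integrable fun x => f' x v * g x)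
    (hfg : Integrable fun x => f x * g x)
    (hf : ∀ x, HasFDerivAt f (f' x) x) (hg : ∀ x, HasFDerivAt g (g' x) x) :
    ∫ x, f x * g' x v = -∫ x, f' x v * g x :=
  integral_bilinear_hasFDerivAt_right_eq_neg_left_of_integrable (B := ContinuousLinearMap.mul ℝ ℝ)
    hf'g hfg' hfg (fun x _ => hf x) (fun x _ => hg x)

theorem C2DominatedOn.integral_mul_fderiv_fderiv {ψ : E → ℝ} {w : E → ℝ}
    (hψ : C2DominatedOn ψ univ w) (v : E) :
    ∫ x, ψ x * fderiv ℝ (fderiv ℝ ψ) x v v = -∫ x, fderiv ℝ ψ x v ^ 2 := by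
  simp only [sq]
  exact integral_mul_eq_neg_of_hasFDerivAt
    (g' := fun x => (ContinuousLinearMap.apply ℝ ℝ v).comp (fderiv ℝ (fderiv ℝ ψ) x))
    (integrableOn_univ.1 (hψ.integrableOn_mul_fderiv_fderiv v))
    (by simpa only [integrableOn_univ, sq] using hψ.integrableOn_fderiv_sq v)
    (integrableOn_univ.1 (hψ.integrableOn_mul_fderiv v))
    (fun x => (hψ.differentiableAt (mem_univ x)).hasFDerivAt)
    (fun x => hψ.hasFDerivAt_fderiv_apply (mem_univ x) v)

theorem C2DominatedOn.setIntegral_univ_prod_mul_fderiv_fderiv {φ : E × ℝ → ℝ} {w : E × ℝ → ℝ}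
    {I : Set ℝ} (hφ : C2DominatedOn φ (univ ×ˢ I) w) (u : E) :
    ∫ x in univ ×ˢ I, φ x * fderiv ℝ (fderiv ℝ φ) x (u, 0) (u, 0)
      = -∫ x in univ ×ˢ I, fderiv ℝ φ x (u, 0) ^ 2 := by
  have hI := hφ.isOpen_of_univ_prod.measurableSet
  have h1 := hφ.integrableOn_mul_fderiv_fderiv (u, 0)
  have h2 := hφ.integrableOn_fderiv_sq (u, 0)
  have h3 := hφ.integrableOn_mul_fderiv (u, 0)
  rw [IntegrableOn, volume_restrict_univ_prod] at h1 h2 h3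
  rw [volume_restrict_univ_prod, integral_prod_symm _ h1, integral_prod_symm _ h2,
    ← integral_neg]
  refine integral_congr_ae ?_
  filter_upwards [ae_restrict_mem hI, h1.prod_left_ae, h2.prod_left_ae, h3.prod_left_ae]
    with s hs h1s h2s h3s
  have hmem : ∀ y : E, (y, s) ∈ univ ×ˢ I := fun y => ⟨mem_univ y, hs⟩
  simp only [sq] at h2s ⊢
  exact integral_mul_eq_neg_of_hasFDerivAt (f := fun y => φ (y, s))
    (f' := fun y => (fderiv ℝ φ (y, s)).comp (ContinuousLinearMap.inl ℝ E ℝ))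
    (g' := fun y => ((ContinuousLinearMap.apply ℝ ℝ (u, 0)).comp
      (fderiv ℝ (fderiv ℝ φ) (y, s))).comp (ContinuousLinearMap.inl ℝ E ℝ))
    h1s h2s h3s
    (fun y => (hφ.differentiableAt (hmem y)).hasFDerivAt.comp y (hasFDerivAt_prodMk_left y s))
    (fun y => (hφ.hasFDerivAt_fderiv_apply (hmem y) (u, 0)).comp
      (g := fun z => fderiv ℝ φ z (u, 0)) y (hasFDerivAt_prodMk_left y s))

end IntegrationByParts

section HalfLine

variable {Y : Type*} [MeasureSpace Y] [SFinite (volume : Measure Y)] {F F' : Y × ℝ → ℝ}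

theorem integral_univ_prod_Ioi_of_hasDerivAt
    (hF : IntegrableOn F (univ ×ˢ Ioi 0)) (hF' : IntegrableOn F' (univ ×ˢ Ioi 0))
    (hderiv : ∀ y, ∀ s ∈ Ioi (0 : ℝ), HasDerivAt (fun r => F (y, r)) (F' (y, s)) s)
    (hcont : ∀ y, ContinuousWithinAt (fun r => F (y, r)) (Ici 0) 0) :
    Integrable (fun y => F (y, 0)) ∧ ∫ x in univ ×ˢ Ioi 0, F' x = -∫ y, F (y, 0) := by
  rw [IntegrableOn, volume_restrict_univ_prod] at hF hF'
  have hslice : ∀ᵐ y, ∫ s in Ioi 0, F' (y, s) = -F (y, 0) := by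
    filter_upwards [hF.prod_right_ae, hF'.prod_right_ae] with y hFy hF'y
    rw [integral_Ioi_of_hasDerivAt_of_tendsto (hcont y) (hderiv y) hF'y
      (tendsto_zero_of_hasDerivAt_of_integrableOn_Ioi (hderiv y) hF'y hFy), zero_sub]
  refine ⟨by simpa using (hF'.integral_prod_left.congr hslice).neg, ?_⟩
  rw [volume_restrict_univ_prod, integral_prod _ hF', ← integral_neg]
  exact integral_congr_ae hslice

theorem integral_univ_prod_Iio_of_hasDerivAt
    (hF : IntegrableOn F (univ ×ˢ Iio 0)) (hF' : IntegrableOn F' (univ ×ˢ Iio 0))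
    (hderiv : ∀ y, ∀ s ∈ Iio (0 : ℝ), HasDerivAt (fun r => F (y, r)) (F' (y, s)) s)
    (hcont : ∀ y, ContinuousWithinAt (fun r => F (y, r)) (Iic 0) 0) :
    Integrable (fun y => F (y, 0)) ∧ ∫ x in univ ×ˢ Iio 0, F' x = ∫ y, F (y, 0) := by
  rw [IntegrableOn, volume_restrict_univ_prod] at hF hF'
  have hslice : ∀ᵐ y, ∫ s in Iio 0, F' (y, s) = F (y, 0) := by
    filter_upwards [hF.prod_right_ae, hF'.prod_right_ae] with y hFy hF'y
    have hsub : Iic (-1 : ℝ) ⊆ Iio 0 := Iic_subset_Iio.2 (by norm_num)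
    replace hFy : IntegrableOn (fun s => F (y, s)) (Iio 0) := hFy
    replace hF'y : IntegrableOn (fun s => F' (y, s)) (Iio 0) := hF'y
    rw [← integral_Iic_eq_integral_Iio, integral_Iic_of_hasDerivAt_of_tendsto (hcont y) (hderiv y)
      ((integrableOn_Iic_iff_integrableOn_Iio).2 hF'y)
      (tendsto_zero_of_hasDerivAt_of_integrableOn_Iic (a := -1) (fun s hs => hderiv y s (hsub hs))
        (hF'y.mono_set hsub) (hFy.mono_set hsub)), sub_zero]
  refine ⟨(hF'.integral_prod_left.congr hslice), ?_⟩
  rw [volume_restrict_univ_prod, integral_prod _ hF']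
  exact integral_congr_ae hslice

end HalfLine

namespace C2DominatedOn

variable {φ w : (ℝ × ℝ) × ℝ → ℝ} {I : Set ℝ} {U : Set ((ℝ × ℝ) × ℝ)}

theorem setIntegral_mul_lapW (hφ : C2DominatedOn φ (univ ×ˢ I) w) (hU : univ ×ˢ I ⊆ U) :
    ∫ x in univ ×ˢ I, φ x * lapW U φ x
      = (∫ x in univ ×ˢ I, (φ x * fderiv ℝ (fderiv ℝ φ) x e3 e3 + fderiv ℝ φ x e3 ^ 2))
        - ∫ x in univ ×ˢ I, gradSqW U φ x := by
  have hO := hφ.isOpen.measurableSet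
  have hnhds : ∀ x ∈ univ ×ˢ I, U ∈ 𝓝 x := fun x hx =>
    mem_of_superset (hφ.isOpen.mem_nhds hx) hU
  rw [setIntegral_congr_fun hO fun x hx => by
      rw [lapW_of_mem_nhds (hnhds x hx) (hφ.differentiableAt_fderiv hx), mul_add, mul_add],
    setIntegral_congr_fun hO fun x hx => gradSqW_of_mem_nhds (hnhds x hx)]
  have hD := hφ.integrableOn_mul_fderiv_fderiv
  have hG := hφ.integrableOn_fderiv_sq
  have h1 : ∫ x in univ ×ˢ I, φ x * fderiv ℝ (fderiv ℝ φ) x e1 e1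
      = -∫ x in univ ×ˢ I, fderiv ℝ φ x e1 ^ 2 := hφ.setIntegral_univ_prod_mul_fderiv_fderiv (1, 0)
  have h2 : ∫ x in univ ×ˢ I, φ x * fderiv ℝ (fderiv ℝ φ) x e2 e2
      = -∫ x in univ ×ˢ I, fderiv ℝ φ x e2 ^ 2 := hφ.setIntegral_univ_prod_mul_fderiv_fderiv (0, 1)
  rw [integral_add (hD e3) (hG e3), integral_add ?_ (hD e3), integral_add (hD e1) (hD e2),
    integral_add ?_ (hG e3), integral_add (hG e1) (hG e2), h1, h2]
  · ring
  · exact (hG e1).add (hG e2)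
  · exact (hD e1).add (hD e2)

theorem hasDerivAt_mul_pdW (hφ : C2DominatedOn φ (univ ×ˢ I) w) (hU : univ ×ˢ I ⊆ U)
    (y : ℝ × ℝ) {s : ℝ} (hs : s ∈ I) :
    HasDerivAt (fun r => φ (y, r) * pdW U e3 φ (y, r))
      (φ (y, s) * fderiv ℝ (fderiv ℝ φ) (y, s) e3 e3 + fderiv ℝ φ (y, s) e3 ^ 2) s := by
  have hmem : ∀ r ∈ I, (y, r) ∈ univ ×ˢ I := fun r hr => ⟨mem_univ y, hr⟩
  have hline : HasDerivAt (fun r : ℝ => (y, r)) e3 s :=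
    (hasDerivAt_const s y).prodMk (hasDerivAt_id s)
  have h := ((hφ.differentiableAt (hmem s hs)).hasFDerivAt.comp_hasDerivAt s hline).mul
    ((hφ.hasFDerivAt_fderiv_apply (hmem s hs) e3).comp_hasDerivAt s hline)
  refine (h.congr_deriv (by simp only [Function.comp_apply, ContinuousLinearMap.comp_apply,
    ContinuousLinearMap.apply_apply]; ring)).congr_of_eventuallyEq ?_
  filter_upwards [hφ.isOpen_of_univ_prod.mem_nhds hs] with r hr
  rw [pdW_of_mem_nhds (mem_of_superset (hφ.isOpen.mem_nhds (hmem r hr)) hU)]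
  rfl

theorem integrableOn_mul_pdW {O : Set ((ℝ × ℝ) × ℝ)} (hφ : C2DominatedOn φ O w) (hU : O ⊆ U) :
    IntegrableOn (fun x => φ x * pdW U e3 φ x) O :=
  (hφ.integrableOn_mul_fderiv e3).congr_fun (fun x hx => by
    rw [pdW_of_mem_nhds (mem_of_superset (hφ.isOpen.mem_nhds hx) hU)]) hφ.isOpen.measurableSet

end C2DominatedOn

theorem ContDiffOn.continuousOn_mul_pdW {φ : (ℝ × ℝ) × ℝ → ℝ} {U : Set ((ℝ × ℝ) × ℝ)}
    (hφ : ContDiffOn ℝ 2 φ U) (hU : UniqueDiffOn ℝ U) :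
    ContinuousOn (fun x => φ x * pdW U e3 φ x) U :=
  hφ.continuousOn.mul ((hφ.continuousOn_fderivWithin hU (by norm_num)).clm_apply
    continuousOn_const)

theorem upperHalf_eq : upperHalf = univ ×ˢ Ioi 0 := by ext; simp [upperHalf]
theorem lowerHalf_eq : lowerHalf = univ ×ˢ Iio 0 := by ext; simp [lowerHalf]
theorem UA_eq : UA = univ ×ˢ Ici 0 := by ext; simp [UA]
theorem UB_eq : UB = univ ×ˢ Iic 0 := by ext; simp [UB]

theorem isOpen_upperHalf : IsOpen upperHalf := isOpen_lt continuous_const continuous_snd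
theorem isOpen_lowerHalf : IsOpen lowerHalf := isOpen_lt continuous_snd continuous_const
theorem upperHalf_subset_UA : upperHalf ⊆ UA := fun x (hx : 0 < x.2) => (hx.le : 0 ≤ x.2)
theorem lowerHalf_subset_UB : lowerHalf ⊆ UB := fun x (hx : x.2 < 0) => (hx.le : x.2 ≤ 0)

theorem integral_upperHalf_mul_lapW {φ w : (ℝ × ℝ) × ℝ → ℝ} (hφ : ContDiffOn ℝ 2 φ UA)
    (hφw : C2DominatedOn φ upperHalf w) :
    Integrable (fun xh => φ (xh, 0) * pdW UA e3 φ (xh, 0)) ∧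
      ∫ x in upperHalf, φ x * lapW UA φ x
        = -(∫ xh, φ (xh, 0) * pdW UA e3 φ (xh, 0)) - ∫ x in upperHalf, gradSqW UA φ x := by
  rw [upperHalf_eq] at hφw ⊢
  have hsub : univ ×ˢ Ioi (0 : ℝ) ⊆ UA := upperHalf_eq ▸ upperHalf_subset_UA
  have hcont := hφ.continuousOn_mul_pdW
    (by rw [UA_eq]; exact uniqueDiffOn_univ.prod (uniqueDiffOn_Ici 0))
  obtain ⟨hint, hvert⟩ := integral_univ_prod_Ioi_of_hasDerivAt
    (F' := fun x => φ x * fderiv ℝ (fderiv ℝ φ) x e3 e3 + fderiv ℝ φ x e3 ^ 2)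
    (hφw.integrableOn_mul_pdW hsub)
    ((hφw.integrableOn_mul_fderiv_fderiv e3).add (hφw.integrableOn_fderiv_sq e3))
    (fun y s hs => hφw.hasDerivAt_mul_pdW hsub y hs)
    (fun y => (hcont.comp (continuous_const.prodMk continuous_id).continuousOn
      fun r (hr : 0 ≤ r) => (hr : 0 ≤ (y, r).2)) 0 self_mem_Ici)
  exact ⟨hint, by rw [hφw.setIntegral_mul_lapW hsub, hvert]⟩

theorem integral_lowerHalf_mul_lapW {φ w : (ℝ × ℝ) × ℝ → ℝ} (hφ : ContDiffOn ℝ 2 φ UB)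
    (hφw : C2DominatedOn φ lowerHalf w) :
    Integrable (fun xh => φ (xh, 0) * pdW UB e3 φ (xh, 0)) ∧
      ∫ x in lowerHalf, φ x * lapW UB φ x
        = (∫ xh, φ (xh, 0) * pdW UB e3 φ (xh, 0)) - ∫ x in lowerHalf, gradSqW UB φ x := by
  rw [lowerHalf_eq] at hφw ⊢
  have hsub : univ ×ˢ Iio (0 : ℝ) ⊆ UB := lowerHalf_eq ▸ lowerHalf_subset_UB
  have hcont := hφ.continuousOn_mul_pdW
    (by rw [UB_eq]; exact uniqueDiffOn_univ.prod (uniqueDiffOn_Iic 0))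
  obtain ⟨hint, hvert⟩ := integral_univ_prod_Iio_of_hasDerivAt
    (F' := fun x => φ x * fderiv ℝ (fderiv ℝ φ) x e3 e3 + fderiv ℝ φ x e3 ^ 2)
    (hφw.integrableOn_mul_pdW hsub)
    ((hφw.integrableOn_mul_fderiv_fderiv e3).add (hφw.integrableOn_fderiv_sq e3))
    (fun y s hs => hφw.hasDerivAt_mul_pdW hsub y hs)
    (fun y => (hcont.comp (continuous_const.prodMk continuous_id).continuousOn
      fun r (hr : r ≤ 0) => (hr : (y, r).2 ≤ 0)) 0 self_mem_Iic)
  exact ⟨hint, by rw [hφw.setIntegral_mul_lapW hsub, hvert]⟩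

theorem integral_mul_lapH {ψ w : ℝ × ℝ → ℝ} (hψ : C2DominatedOn ψ univ w) :
    Integrable (fun x => ψ x * lapH ψ x) ∧ ∫ x, ψ x * lapH ψ x = -∫ x, gradSqH ψ x := by
  have hlap : (fun x => ψ x * lapH ψ x) = fun x => ψ x * fderiv ℝ (fderiv ℝ ψ) x (1, 0) (1, 0)
      + ψ x * fderiv ℝ (fderiv ℝ ψ) x (0, 1) (0, 1) := by
    ext x; rw [lapH_eq (hψ.differentiableAt_fderiv (mem_univ x)), mul_add]
  have hD := fun v => integrableOn_univ.1 (hψ.integrableOn_mul_fderiv_fderiv v)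
  have hG := fun v => integrableOn_univ.1 (hψ.integrableOn_fderiv_sq v)
  refine ⟨hlap ▸ (hD _).add (hD _), ?_⟩
  rw [hlap, integral_add (hD _) (hD _), hψ.integral_mul_fderiv_fderiv,
    hψ.integral_mul_fderiv_fderiv]
  simp only [gradSqH, pdH]
  rw [integral_add (hG _) (hG _)]
  ring

theorem hasDerivAt_integral_sq {α : Type*} [MeasurableSpace α] {μ : Measure α}
    {θ : α → ℝ → ℝ} {g : α → ℝ} {U : Set ℝ} {t : ℝ} (hU : U ∈ 𝓝 t)
    (hmeas : ∀ r ∈ U, AEStronglyMeasurable (fun a => θ a r) μ)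
    (hmeas' : AEStronglyMeasurable (fun a => deriv (θ a) t) μ)
    (hg : Integrable (fun a => g a ^ 2) μ)
    (hdiff : ∀ᵐ a ∂μ, ∀ r ∈ U, DifferentiableAt ℝ (θ a) r)
    (hbound : ∀ᵐ a ∂μ, ∀ r ∈ U, |θ a r| ≤ g a ∧ |deriv (θ a) r| ≤ g a) :
    HasDerivAt (fun r => ∫ a, θ a r ^ 2 ∂μ) (∫ a, 2 * θ a t * deriv (θ a) t ∂μ) t := by
  have ht : t ∈ U := mem_of_mem_nhds hU
  refine (hasDerivAt_integral_of_dominated_loc_of_deriv_le (bound := fun a => 2 * g a ^ 2)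
    (F' := fun r a => 2 * θ a r * deriv (θ a) r) hU
    (mem_of_superset hU fun r hr => (hmeas r hr).pow 2) ?_
    (((hmeas t ht).const_mul 2).mul hmeas') ?_ (hg.const_mul 2) ?_).2
  · refine hg.mono' ((hmeas t ht).pow 2) ?_
    filter_upwards [hbound] with a ha
    simp only [Pi.pow_apply, Real.norm_eq_abs, abs_pow]
    exact pow_le_pow_left₀ (abs_nonneg _) (ha t ht).1 2
  · filter_upwards [hbound] with a ha r hr
    rw [Real.norm_eq_abs, abs_mul, abs_mul, abs_two, sq, mul_assoc]
    gcongr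
    · exact (abs_nonneg _).trans (ha r hr).1
    · exact (ha r hr).1
    · exact (ha r hr).2
  · filter_upwards [hdiff] with a ha r hr
    exact ((ha r hr).hasDerivAt.pow 2).congr_deriv (by ring)

-- instance search does not see that `volume` on a product is `volume.prod volume`
instance : Measure.IsAddHaarMeasure (volume : Measure ((ℝ × ℝ) × ℝ)) :=
  Measure.prod.instIsAddHaarMeasure _ _

section Decay

variable {F : Type*} [NormedAddCommGroup F] [NormedSpace ℝ F]

def DecayBound (θ : F → ℝ → ℝ) (U : Set F) (T : ℝ) (M : ℝ → ℝ) : Prop :=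
  ∀ x ∈ U, ∀ t ∈ Ioo (0 : ℝ) T,
    |θ x t| + |deriv (θ x) t| + ‖fderivWithin ℝ (fun y => θ y t) U x‖
      + ‖fderivWithin ℝ (fderivWithin ℝ (fun y => θ y t) U) U x‖ ≤ M t / (1 + ‖x‖) ^ 4

variable [FiniteDimensional ℝ F] [MeasureSpace F] [BorelSpace F]
  [(volume : Measure F).IsAddHaarMeasure] {θ : F → ℝ → ℝ} {U : Set F} {T t : ℝ} {M : ℝ → ℝ}

theorem DecayBound.c2DominatedOn (hF : finrank ℝ F < 8) (hdec : DecayBound θ U T M)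
    (hθ : ContDiffOn ℝ 2 (fun x => θ x t) U) {O : Set F} (hO : IsOpen O) (hOU : O ⊆ U)
    (ht : t ∈ Ioo 0 T) :
    C2DominatedOn (fun x => θ x t) O (fun x => M t / (1 + ‖x‖) ^ 4) := by
  have hbound : ∀ x ∈ O, |θ x t| + ‖fderiv ℝ (fun y => θ y t) x‖
      + ‖fderiv ℝ (fderiv ℝ fun y => θ y t) x‖ ≤ M t / (1 + ‖x‖) ^ 4 := fun x hx => by
    have hU : U ∈ 𝓝 x := mem_of_superset (hO.mem_nhds hx) hOU
    have h := hdec x (hOU hx) t ht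
    rw [fderivWithin_of_mem_nhds hU, fderivWithin_fderivWithin_of_mem_nhds hU] at h
    linarith [abs_nonneg (deriv (θ x) t)]
  refine ⟨hO, hθ.mono hOU, fun x hx => ?_, fun x hx => ?_, fun x hx => ?_,
    (integrable_sq_div_one_add_norm_pow_four hF (M t)).integrableOn⟩ <;>
  linarith [hbound x hx, abs_nonneg (θ x t), norm_nonneg (fderiv ℝ (fun y => θ y t) x),
    norm_nonneg (fderiv ℝ (fderiv ℝ fun y => θ y t) x)]

theorem DecayBound.hasDerivAt_setIntegral_sq (hF : finrank ℝ F < 8) (hdec : DecayBound θ U T M)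
    (hM : ContinuousOn M (Ioo 0 T))
    (hcont : ContinuousOn (fun p : F × ℝ => θ p.1 p.2) (U ×ˢ Ioo 0 T))
    (hdiff : ∀ x ∈ U, ∀ r ∈ Ioo (0 : ℝ) T, DifferentiableAt ℝ (θ x) r)
    (hcont' : ContinuousOn (fun p : F × ℝ => deriv (θ p.1) p.2) (U ×ˢ Ioo 0 T))
    {s : Set F} (hs : MeasurableSet s) (hsU : s ⊆ U) (ht : t ∈ Ioo 0 T) :
    HasDerivAt (fun r => ∫ x in s, θ x r ^ 2) (∫ x in s, 2 * θ x t * deriv (θ x) t) t := by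
  have hT : Ioo 0 T ∈ 𝓝 t := Ioo_mem_nhds ht.1 ht.2
  have hslice : ∀ r ∈ Ioo (0 : ℝ) T, MapsTo (fun x => (x, r)) s (U ×ˢ Ioo 0 T) :=
    fun r hr x hx => ⟨hsU hx, hr⟩
  refine hasDerivAt_integral_sq (g := fun x => (M t + 1) / (1 + ‖x‖) ^ 4)
    (inter_mem hT ((hM.continuousAt hT).eventually (gt_mem_nhds (lt_add_one (M t)))))
    (fun r hr => ((hcont.comp (continuous_id.prodMk continuous_const).continuousOn
      (hslice r hr.1)).aestronglyMeasurable hs))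
    ((hcont'.comp (continuous_id.prodMk continuous_const).continuousOn
      (hslice t ht)).aestronglyMeasurable hs)
    (integrable_sq_div_one_add_norm_pow_four hF (M t + 1)).integrableOn
    (ae_restrict_of_forall_mem hs fun x hx r hr => hdiff x (hsU hx) r hr.1)
    (ae_restrict_of_forall_mem hs fun x hx r hr => ?_)
  have h := hdec x (hsU hx) r hr.1
  have hMr : M r / (1 + ‖x‖) ^ 4 ≤ (M t + 1) / (1 + ‖x‖) ^ 4 := by
    gcongr; exact hr.2.le
  constructor <;>
  linarith [abs_nonneg (θ x r), abs_nonneg (deriv (θ x) r),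
    norm_nonneg (fderivWithin ℝ (fun y => θ y r) U x),
    norm_nonneg (fderivWithin ℝ (fderivWithin ℝ (fun y => θ y r) U) U x)]

end Decay

namespace ClassicalDecayingSolution

variable {T κA κB κS αS : ℝ} {θA θB : (ℝ × ℝ) × ℝ → ℝ → ℝ} {θS : ℝ × ℝ → ℝ → ℝ} {t : ℝ}

theorem exists_decayBound (hsol : ClassicalDecayingSolution T κA κB κS αS θA θB θS) :
    ∃ M, ContinuousOn M (Ioo 0 T) ∧ DecayBound θA UA T M ∧ DecayBound θB UB T M
      ∧ DecayBound θS univ T M := by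
  obtain ⟨M, hM, hbA, hbB, hbS⟩ := hsol.decay
  exact ⟨M, hM, hbA, hbB, fun x _ r hr => by simpa only [fderivWithin_univ] using hbS x r hr⟩

theorem hasDerivAt_energy (hsol : ClassicalDecayingSolution T κA κB κS αS θA θB θS)
    (ht : t ∈ Ioo 0 T) :
    HasDerivAt (energy αS θA θB θS)
      ((∫ x in upperHalf, 2 * θA x t * deriv (θA x) t)
        + (∫ x in lowerHalf, 2 * θB x t * deriv (θB x) t)
        + αS * ∫ xh, 2 * θS xh t * deriv (θS xh) t) t := by
  obtain ⟨M, hM, hbA, hbB, hbS⟩ := hsol.exists_decayBound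
  have hA := hbA.hasDerivAt_setIntegral_sq (by simp) hM hsol.contA hsol.timeA
    hsol.timeDerivContA isOpen_upperHalf.measurableSet upperHalf_subset_UA ht
  have hB := hbB.hasDerivAt_setIntegral_sq (by simp) hM hsol.contB hsol.timeB
    hsol.timeDerivContB isOpen_lowerHalf.measurableSet lowerHalf_subset_UB ht
  have hS := hbS.hasDerivAt_setIntegral_sq (by simp) hM hsol.contS (fun x _ => hsol.timeS x)
    hsol.timeDerivContS MeasurableSet.univ subset_rfl ht
  rw [Measure.restrict_univ] at hS
  exact (hA.add hB).add (hS.const_mul αS)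

theorem integral_upperHalf_two_mul_deriv
    (hsol : ClassicalDecayingSolution T κA κB κS αS θA θB θS) (ht : t ∈ Ioo 0 T) :
    Integrable (fun xh => θA (xh, 0) t * pdW UA e3 (fun y => θA y t) (xh, 0)) ∧
      ∫ x in upperHalf, 2 * θA x t * deriv (θA x) t
        = -2 * κA * (∫ xh, θA (xh, 0) t * pdW UA e3 (fun y => θA y t) (xh, 0))
          - 2 * κA * ∫ x in upperHalf, gradSqW UA (fun y => θA y t) x := by
  obtain ⟨M, -, hbA, -, -⟩ := hsol.exists_decayBound
  obtain ⟨hflux, hGreen⟩ := integral_upperHalf_mul_lapW (hsol.spaceA t ht)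
    (hbA.c2DominatedOn (by simp) (hsol.spaceA t ht) isOpen_upperHalf upperHalf_subset_UA ht)
  refine ⟨hflux, ?_⟩
  calc ∫ x in upperHalf, 2 * θA x t * deriv (θA x) t
      = 2 * κA * ∫ x in upperHalf, θA x t * lapW UA (fun y => θA y t) x := by
        rw [← integral_const_mul]
        refine setIntegral_congr_fun isOpen_upperHalf.measurableSet fun x hx => ?_
        rw [hsol.pdeA x hx t ht]; ring
    _ = _ := by rw [hGreen]; ring

theorem integral_lowerHalf_two_mul_deriv
    (hsol : ClassicalDecayingSolution T κA κB κS αS θA θB θS) (ht : t ∈ Ioo 0 T) :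
    Integrable (fun xh => θB (xh, 0) t * pdW UB e3 (fun y => θB y t) (xh, 0)) ∧
      ∫ x in lowerHalf, 2 * θB x t * deriv (θB x) t
        = 2 * κB * (∫ xh, θB (xh, 0) t * pdW UB e3 (fun y => θB y t) (xh, 0))
          - 2 * κB * ∫ x in lowerHalf, gradSqW UB (fun y => θB y t) x := by
  obtain ⟨M, -, -, hbB, -⟩ := hsol.exists_decayBound
  obtain ⟨hflux, hGreen⟩ := integral_lowerHalf_mul_lapW (hsol.spaceB t ht)
    (hbB.c2DominatedOn (by simp) (hsol.spaceB t ht) isOpen_lowerHalf lowerHalf_subset_UB ht)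
  refine ⟨hflux, ?_⟩
  calc ∫ x in lowerHalf, 2 * θB x t * deriv (θB x) t
      = 2 * κB * ∫ x in lowerHalf, θB x t * lapW UB (fun y => θB y t) x := by
        rw [← integral_const_mul]
        refine setIntegral_congr_fun isOpen_lowerHalf.measurableSet fun x hx => ?_
        rw [hsol.pdeB x hx t ht]; ring
    _ = _ := by rw [hGreen]; ring

theorem integral_surface_two_mul_deriv
    (hsol : ClassicalDecayingSolution T κA κB κS αS θA θB θS) (ht : t ∈ Ioo 0 T) :
    αS * ∫ xh, 2 * θS xh t * deriv (θS xh) t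
      = -2 * κS * (∫ xh, gradSqH (fun y => θS y t) xh)
        + 2 * κA * (∫ xh, θA (xh, 0) t * pdW UA e3 (fun y => θA y t) (xh, 0))
        - 2 * κB * ∫ xh, θB (xh, 0) t * pdW UB e3 (fun y => θB y t) (xh, 0) := by
  obtain ⟨M, -, -, -, hbS⟩ := hsol.exists_decayBound
  obtain ⟨hlap, hGreen⟩ := integral_mul_lapH
    (hbS.c2DominatedOn (by simp) (hsol.spaceS t ht).contDiffOn isOpen_univ subset_rfl ht)
  have hfluxA := (hsol.integral_upperHalf_two_mul_deriv ht).1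
  have hfluxB := (hsol.integral_lowerHalf_two_mul_deriv ht).1
  have hS : -2 * κS * ∫ xh, gradSqH (fun y => θS y t) xh
      = 2 * κS * ∫ xh, θS xh t * lapH (fun y => θS y t) xh := by
    rw [hGreen]; ring
  rw [hS, ← integral_const_mul, ← integral_const_mul, ← integral_const_mul,
    ← integral_const_mul, ← integral_add (hlap.const_mul _) (hfluxA.const_mul _),
    ← integral_sub ?_ (hfluxB.const_mul _)]
  · congr 1; ext xh
    rw [hsol.interfaceA xh t ht, hsol.interfaceB xh t ht]
    linear_combination (2 * θS xh t) * hsol.pdeS xh t ht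
  · exact (hlap.const_mul _).add (hfluxA.const_mul _)

end ClassicalDecayingSolution

theorem energy_hasDerivAt_general (T κA κB κS αS : ℝ)
    (θA θB : (ℝ × ℝ) × ℝ → ℝ → ℝ) (θS : ℝ × ℝ → ℝ → ℝ)
    (hsol : ClassicalDecayingSolution T κA κB κS αS θA θB θS) :
    ∀ t ∈ Set.Ioo (0 : ℝ) T,
      HasDerivAt (energy αS θA θB θS)
        (-2 * κA * (∫ x in upperHalf, gradSqW UA (fun y => θA y t) x)
          - 2 * κB * (∫ x in lowerHalf, gradSqW UB (fun y => θB y t) x)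
          - 2 * κS * ∫ xh : ℝ × ℝ, gradSqH (fun y => θS y t) xh) t := by
  intro t ht
  convert hsol.hasDerivAt_energy ht using 1
  rw [(hsol.integral_upperHalf_two_mul_deriv ht).2, (hsol.integral_lowerHalf_two_mul_deriv ht).2,
    hsol.integral_surface_two_mul_deriv ht]
  ring

/-- differential form of the energy equality (1.3) in Theorem 1.1.
For any classical decaying solution of the three-phase heat system, the energy `E` is
differentiable on `(0,T)` with
`E'(t) = −2κ_A ∫_{ℝ³₊} |∇θ_A|² − 2κ_B ∫_{ℝ³₋} |∇θ_B|² − 2κ_S ∫_{ℝ²} |∇_hθ_S|²`;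
in particular the interface flux terms cancel in the energy balance. -/
theorem energy_hasDerivAt (T κA κB κS αS : ℝ) (hT : 0 < T)
    (hκA : 0 < κA) (hκB : 0 < κB) (hκS : 0 < κS) (hαS : 0 < αS)
    (θA θB : (ℝ × ℝ) × ℝ → ℝ → ℝ) (θS : ℝ × ℝ → ℝ → ℝ)
    (hsol : ClassicalDecayingSolution T κA κB κS αS θA θB θS) :
    ∀ t ∈ Set.Ioo (0 : ℝ) T,
      HasDerivAt (energy αS θA θB θS)
        (-2 * κA * (∫ x in upperHalf, gradSqW UA (fun y => θA y t) x)
          - 2 * κB * (∫ x in lowerHalf, gradSqW UB (fun y => θB y t) x)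
          - 2 * κS * ∫ xh : ℝ × ℝ, gradSqH (fun y => θS y t) xh) t :=
  energy_hasDerivAt_general T κA κB κS αS θA θB θS hsol

end
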